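/- arXiv:1406.2282 — 2 statements merged into one kernel-verified Lean document; each statement's English description precedes it below -/
import Mathlib

section
/- Let S be a real symmetric n×n matrix with largest eigenvalue ζ₁ and corresponding unit eigenvector ν₁. Then P = max(ζ₁, 0)·ν₁ν₁ᵀ minimizes ‖P − S‖_F² over all positive semidefinite matrices P with rank(P) ≤ 1. -/
/-!
A positive semidefinite matrix of rank at most one is an outer product `v vᵀ` (its spectral
decomposition has at most one nonzero term). Writing `t = ‖v‖²`, the expansion
`‖v vᵀ - S‖²_F = t² - 2 vᵀ S v + ‖S‖²_F` and the Rayleigh bound `vᵀ S v ≤ ζ₁ t` reduce the claim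
to minimising the scalar function `t² - 2 ζ₁ t` over `t ≥ 0`, whose minimiser is `max ζ₁ 0`;
the candidate `max ζ₁ 0 • ν₁ ν₁ᵀ` attains that value since `ν₁ᵀ S ν₁ = ζ₁`.
-/

open Matrix

/-- Squared Frobenius norm. -/
noncomputable def frobSq {n : ℕ} (A : Matrix (Fin n) (Fin n) ℝ) : ℝ :=
  ∑ i, ∑ j, (A i j) ^ 2

namespace Matrix

variable {ι : Type*} [Fintype ι] [DecidableEq ι]

theorem IsHermitian.dotProduct_mulVec_le {S : Matrix ι ι ℝ} (hS : S.IsHermitian) {c : ℝ}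
    (hc : ∀ i, hS.eigenvalues i ≤ c) (v : ι → ℝ) : v ⬝ᵥ S *ᵥ v ≤ c * (v ⬝ᵥ v) := by
  have hpsd : (algebraMap ℝ _ c - S).PosSemidef := by
    refine posSemidef_iff_isHermitian_and_spectrum_nonneg.mpr ⟨(isHermitian_diagonal _).sub hS, ?_⟩
    rw [← spectrum.singleton_sub_eq, hS.spectrum_real_eq_range_eigenvalues]
    rintro _ ⟨_, rfl, _, ⟨i, rfl⟩, rfl⟩
    simpa using hc i
  simpa [Algebra.algebraMap_eq_smul_one, sub_mulVec, smul_mulVec, dotProduct_sub, dotProduct_smul]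
    using hpsd.dotProduct_mulVec_nonneg v

theorem IsHermitian.eq_sum_eigenvalues_smul_vecMulVec {A : Matrix ι ι ℝ} (hA : A.IsHermitian) :
    A = ∑ i, hA.eigenvalues i • vecMulVec (hA.eigenvectorBasis i) (hA.eigenvectorBasis i) := by
  conv_lhs => rw [hA.spectral_theorem]
  ext j k
  simp [Matrix.mul_apply, vecMulVec_apply, Matrix.sum_apply, diagonal_apply, mul_comm, mul_assoc]

theorem PosSemidef.exists_eq_vecMulVec_self_of_rank_le_one {P : Matrix ι ι ℝ}
    (hP : P.PosSemidef) (hr : P.rank ≤ 1) : ∃ v : ι → ℝ, P = vecMulVec v v := by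
  have hH := hP.isHermitian
  have hsupp : ∀ i j, hH.eigenvalues i ≠ 0 → hH.eigenvalues j ≠ 0 → i = j := fun i j hi hj =>
    congrArg Subtype.val <| Fintype.card_le_one_iff.mp
      (hH.rank_eq_card_non_zero_eigs ▸ hr) ⟨i, hi⟩ ⟨j, hj⟩
  rw [hH.eq_sum_eigenvalues_smul_vecMulVec]
  by_cases h : ∃ i₀, hH.eigenvalues i₀ ≠ 0
  · obtain ⟨i₀, hi₀⟩ := h
    refine ⟨√(hH.eigenvalues i₀) • hH.eigenvectorBasis i₀, ?_⟩
    rw [Finset.sum_eq_single i₀]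
    · rw [smul_vecMulVec, vecMulVec_smul, smul_smul, Real.mul_self_sqrt (hP.eigenvalues_nonneg i₀)]
    · intro i _ hi
      have : hH.eigenvalues i = 0 := by
        by_contra h
        exact hi (hsupp i i₀ h hi₀)
      simp [this]
    · simp
  · push Not at h
    exact ⟨0, by simp [h]⟩

end Matrix

theorem frobSq_smul_vecMulVec_self_sub {n : ℕ} (c : ℝ) (v : Fin n → ℝ)
    (S : Matrix (Fin n) (Fin n) ℝ) :
    frobSq (c • vecMulVec v v - S) = c ^ 2 * (v ⬝ᵥ v) ^ 2 - 2 * c * (v ⬝ᵥ S *ᵥ v) + frobSq S := by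
  simp only [frobSq, Matrix.sub_apply, Matrix.smul_apply, vecMulVec_apply, smul_eq_mul,
    dotProduct, mulVec, sq, Finset.sum_mul, Finset.mul_sum, ← Finset.sum_add_distrib, ← Finset.sum_sub_distrib]
  refine Finset.sum_congr rfl fun i _ => Finset.sum_congr rfl fun j _ => ?_
  ring

theorem isMinOn_sq_sub_two_mul_max_zero (ζ : ℝ) :
    IsMinOn (fun t : ℝ => t ^ 2 - 2 * ζ * t) (Set.Ici 0) (max ζ 0) := by
  refine isMinOn_iff.mpr fun t (ht : 0 ≤ t) => ?_
  rcases le_total ζ 0 with h | h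
  · rw [max_eq_right h]
    nlinarith
  · rw [max_eq_left h]
    nlinarith [sq_nonneg (t - ζ)]

theorem stmt0 {n : ℕ} (S : Matrix (Fin n) (Fin n) ℝ) (hS : S.IsSymm)
    (ζ₁ : ℝ) (ν₁ : Fin n → ℝ)
    (hunit : ∑ i, (ν₁ i) ^ 2 = 1)
    (heig : S.mulVec ν₁ = ζ₁ • ν₁)
    (hmax : ∀ (ζ : ℝ) (v : Fin n → ℝ), v ≠ 0 → S.mulVec v = ζ • v → ζ ≤ ζ₁) :
    ∀ P : Matrix (Fin n) (Fin n) ℝ, P.PosSemidef → P.rank ≤ 1 →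
      frobSq (max ζ₁ 0 • vecMulVec ν₁ ν₁ - S) ≤ frobSq (P - S) := by
  intro P hP hr
  obtain ⟨v, rfl⟩ := hP.exists_eq_vecMulVec_self_of_rank_le_one hr
  have hH : S.IsHermitian := isHermitian_iff_isSymm.mpr hS
  have heigenvalues_le : ∀ i, hH.eigenvalues i ≤ ζ₁ := fun i =>
    hmax _ _ ((WithLp.ofLp_eq_zero 2).ne.2 (hH.eigenvectorBasis.orthonormal.ne_zero i))
      (hH.mulVec_eigenvectorBasis i)
  have hRayleigh := hH.dotProduct_mulVec_le heigenvalues_le v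
  have hν : ν₁ ⬝ᵥ ν₁ = 1 := by simpa [dotProduct, sq] using hunit
  have hq : ν₁ ⬝ᵥ S *ᵥ ν₁ = ζ₁ := by rw [heig, dotProduct_smul, hν, smul_eq_mul, mul_one]
  have hmin := isMinOn_iff.mp (isMinOn_sq_sub_two_mul_max_zero ζ₁) (v ⬝ᵥ v)
    (by simpa using dotProduct_self_star_nonneg v)
  rw [← one_smul ℝ (vecMulVec v v), frobSq_smul_vecMulVec_self_sub,
    frobSq_smul_vecMulVec_self_sub, hν, hq]
  linarith
end

section
/- For a symmetric matrix S with eigenvalues ζ₁ ≥ ... ≥ ζₙ, and any P = ζ·ννᵀ with ζ ≥ 0 and ‖ν‖₂ = 1, one has ‖P − S‖_F² = ζ² + Σᵢ ζᵢ² − 2ζ·νᵀSν ≥ (ζ − ζ₁)² + Σ_{i≥2} ζᵢ² ≥ Σ_{i≥2} ζᵢ² + min(ζ₁, 0)². -/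
open Matrix Finset

section Aux
variable {n : ℕ} [NeZero n] {S : Matrix (Fin n) (Fin n) ℝ}

lemma sumSq_eq (hS : S.IsHermitian) :
    ∑ i, ∑ j, (S i j)^2 = ∑ i, (hS.eigenvalues i)^2 := by
  set V := (hS.eigenvectorUnitary : Matrix (Fin n) (Fin n) ℝ) with hV
  set D := Matrix.diagonal hS.eigenvalues with hDdef
  have h1 : star V * V = 1 := (Matrix.mem_unitaryGroup_iff').mp hS.eigenvectorUnitary.2
  have h2 : ∀ X : Matrix (Fin n) (Fin n) ℝ, star V * (V * X) = X := fun X => by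
    rw [← Matrix.mul_assoc, h1, Matrix.one_mul]
  have key : ∑ i, ∑ j, (S i j)^2 = Matrix.trace (S * S) := by
    rw [Matrix.trace]
    simp only [Matrix.mul_apply, Matrix.diag_apply, sq]
    rw [Finset.sum_comm]
    refine Finset.sum_congr rfl fun i _ => Finset.sum_congr rfl fun j _ => ?_
    have := hS.apply i j
    simp only [star_trivial] at this
    rw [this]
  have hSe : S = V * D * star V := by
    have := hS.spectral_theorem
    rwa [RCLike.ofReal_real_eq_id, Function.id_comp] at this
  rw [key]
  conv_lhs => rw [hSe]
  simp only [Matrix.mul_assoc]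
  rw [h2, Matrix.trace_mul_comm]
  simp only [Matrix.mul_assoc]
  rw [h1, Matrix.mul_one, hDdef, Matrix.diagonal_mul_diagonal, Matrix.trace_diagonal]
  simp [sq]

lemma rayleigh_le (hS : S.IsHermitian) (ν : Fin n → ℝ) (hunit : ∑ i, (ν i) ^ 2 = 1)
    (c : ℝ) (hc : ∀ i, hS.eigenvalues i ≤ c) : ν ⬝ᵥ S.mulVec ν ≤ c := by
  set V := (hS.eigenvectorUnitary : Matrix (Fin n) (Fin n) ℝ) with hV
  set D := Matrix.diagonal hS.eigenvalues with hDdef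
  have h1 : V * star V = 1 := (Matrix.mem_unitaryGroup_iff).mp hS.eigenvectorUnitary.2
  have hSe : S = V * D * star V := by
    have := hS.spectral_theorem
    rwa [RCLike.ofReal_real_eq_id, Function.id_comp] at this
  have hvm : ν ᵥ* V = (star V).mulVec ν := by
    ext j
    simp [Matrix.vecMul, Matrix.mulVec, dotProduct, star_apply, mul_comm]
  have hνS : ν ⬝ᵥ S.mulVec ν = ∑ i, hS.eigenvalues i * ((star V *ᵥ ν) i)^2 := by
    conv_lhs => rw [hSe]
    rw [← Matrix.mulVec_mulVec, ← Matrix.mulVec_mulVec, Matrix.dotProduct_mulVec ν V, hvm]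
    rw [dotProduct]
    refine Finset.sum_congr rfl fun i _ => ?_
    rw [hDdef, Matrix.mulVec_diagonal]
    ring
  have hwsum : ∑ i, ((star V *ᵥ ν) i)^2 = 1 := by
    have e1 : ∑ i, ((star V *ᵥ ν) i)^2 = (star V *ᵥ ν) ⬝ᵥ (star V *ᵥ ν) := by
      simp [dotProduct, sq]
    rw [e1, Matrix.dotProduct_mulVec, ← hvm, Matrix.vecMul_vecMul, h1, Matrix.vecMul_one]
    simpa [dotProduct, sq] using hunit
  rw [hνS]
  calc ∑ i, hS.eigenvalues i * ((star V *ᵥ ν) i)^2 ≤ ∑ i, c * ((star V *ᵥ ν) i)^2 := by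
        apply Finset.sum_le_sum
        intro i _
        exact mul_le_mul_of_nonneg_right (hc i) (sq_nonneg _)
    _ = c := by rw [← Finset.mul_sum, hwsum, mul_one]
end Aux

theorem stmt3 {n : ℕ} [NeZero n] (S : Matrix (Fin n) (Fin n) ℝ)
    (hS : S.IsHermitian) (ζ : Fin n → ℝ)
    (hperm : ∃ σ : Equiv.Perm (Fin n), ∀ i, ζ i = hS.eigenvalues (σ i))
    (hanti : Antitone ζ)
    (ζc : ℝ) (hζc : 0 ≤ ζc) (ν : Fin n → ℝ) (hunit : ∑ i, (ν i) ^ 2 = 1)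
    (P : Matrix (Fin n) (Fin n) ℝ) (hP : P = ζc • vecMulVec ν ν) :
    frobSq (P - S) = ζc ^ 2 + (∑ i, (ζ i) ^ 2) - 2 * ζc * (ν ⬝ᵥ S.mulVec ν) ∧
    (ζc - ζ 0) ^ 2 + (∑ i ∈ univ.erase 0, (ζ i) ^ 2) ≤ frobSq (P - S) ∧
    (∑ i ∈ univ.erase 0, (ζ i) ^ 2) + (min (ζ 0) 0) ^ 2 ≤
      (ζc - ζ 0) ^ 2 + (∑ i ∈ univ.erase 0, (ζ i) ^ 2) := by
  obtain ⟨σ, hσ⟩ := hperm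
  have hζsum : ∑ i, (ζ i)^2 = ∑ i, (hS.eigenvalues i)^2 := by
    calc ∑ i, (ζ i)^2 = ∑ i, (hS.eigenvalues (σ i))^2 := by simp [hσ]
      _ = _ := Equiv.sum_comp σ (fun i => hS.eigenvalues i ^ 2)
  have hmax : ∀ i, hS.eigenvalues i ≤ ζ 0 := fun i => by
    have h := hσ (σ.symm i)
    rw [Equiv.apply_symm_apply] at h
    rw [← h]
    exact hanti (Fin.zero_le _)
  have hR : ν ⬝ᵥ S.mulVec ν ≤ ζ 0 := rayleigh_le hS ν hunit (ζ 0) hmax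
  have part1 : frobSq (P - S) = ζc^2 + (∑ i, (ζ i)^2) - 2*ζc*(ν ⬝ᵥ S.mulVec ν) := by
    rw [frobSq]
    have expand : ∀ i j : Fin n, ((P - S) i j)^2 =
        ζc^2 * (ν i^2 * ν j^2) - 2*ζc*(ν i * (S i j * ν j)) + (S i j)^2 := by
      intro i j
      rw [hP]
      simp only [Matrix.sub_apply, Matrix.smul_apply, Matrix.vecMulVec_apply, smul_eq_mul]
      ring
    simp only [expand, Finset.sum_add_distrib, Finset.sum_sub_distrib, ← Finset.mul_sum, hunit,
      mul_one]
    rw [sumSq_eq hS, ← hζsum]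
    have : ν ⬝ᵥ S.mulVec ν = ∑ i, ν i * ∑ j, S i j * ν j := by
      simp [dotProduct, Matrix.mulVec]
    rw [this]
    ring
  have hsplit : ∑ i, (ζ i)^2 = (∑ i ∈ univ.erase 0, (ζ i)^2) + (ζ 0)^2 :=
    (Finset.sum_erase_add univ _ (mem_univ 0)).symm
  refine ⟨part1, ?_, ?_⟩
  · rw [part1, hsplit]
    nlinarith [mul_le_mul_of_nonneg_left hR hζc]
  · rcases le_or_gt 0 (ζ 0) with h | h
    · rw [min_eq_right h]
      nlinarith [sq_nonneg (ζc - ζ 0)]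
    · rw [min_eq_left h.le]
      nlinarith [h.le, hζc]
end
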